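/- Let I ⊆ ℝ be an open interval and let v : ℝ² × I → ℝ be smooth and positive with ∂v/∂t = v·Δv − ‖∇v‖² everywhere (∇, Δ Euclidean, in the x variable). Define Q := v·(∂³v/∂z³)·(∂³v/∂z̄³), where the Wirtinger derivatives are taken in the x variable. Then Q satisfies, at every point of ℝ² × I, the identity ∂Q/∂t = v·ΔQ − 16·v⁻¹·(v·(∂²v/∂z∂z̄) − (∂v/∂z)(∂v/∂z̄))·Q − 4·(v·(∂⁴v/∂z⁴) + 2(∂v/∂z)(∂³v/∂z³))·(v·(∂⁴v/∂z̄⁴) + 2(∂v/∂z̄)(∂³v/∂z̄³)) − 4·(v·(∂⁴v/∂z³∂z̄) − (∂v/∂z̄)(∂³v/∂z³))·(v·(∂⁴v/∂z̄³∂z) − (∂v/∂z)(∂³v/∂z̄³)), where ΔQ is the Euclidean Laplacian of Q in the x variable. -/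

import Mathlib

/- We identify `ℝ²` with `ℂ` via `(x₁,x₂) ↦ z = x₁ + i x₂`. -/

/-- Partial derivative of a complex-valued function in the first Euclidean
coordinate. -/
noncomputable def pdx (f : ℂ → ℂ) (z : ℂ) : ℂ :=
  deriv (fun s : ℝ => f (z + (s : ℂ))) 0

/-- Partial derivative of a complex-valued function in the second Euclidean
coordinate. -/
noncomputable def pdy (f : ℂ → ℂ) (z : ℂ) : ℂ :=
  deriv (fun s : ℝ => f (z + (s : ℂ) * Complex.I)) 0

/-- The Wirtinger derivative `∂f/∂z = (1/2)(∂f/∂x₁ − i ∂f/∂x₂)`. -/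
noncomputable def wz (f : ℂ → ℂ) : ℂ → ℂ :=
  fun z => (pdx f z - Complex.I * pdy f z) / 2

/-- The Wirtinger derivative `∂f/∂z̄ = (1/2)(∂f/∂x₁ + i ∂f/∂x₂)`. -/
noncomputable def wzb (f : ℂ → ℂ) : ℂ → ℂ :=
  fun z => (pdx f z + Complex.I * pdy f z) / 2

/-- Euclidean Laplacian of a complex-valued function on `ℝ² ≅ ℂ`. -/
noncomputable def lapC (f : ℂ → ℂ) (z : ℂ) : ℂ :=
  pdx (pdx f) z + pdy (pdy f) z

/-- Partial derivative of a real-valued function in the first Euclidean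
coordinate. -/
noncomputable def pdxR (f : ℂ → ℝ) (z : ℂ) : ℝ :=
  deriv (fun s : ℝ => f (z + (s : ℂ))) 0

/-- Partial derivative of a real-valued function in the second Euclidean
coordinate. -/
noncomputable def pdyR (f : ℂ → ℝ) (z : ℂ) : ℝ :=
  deriv (fun s : ℝ => f (z + (s : ℂ) * Complex.I)) 0

/-- Euclidean Laplacian on `ℝ² ≅ ℂ`. -/
noncomputable def lapR (f : ℂ → ℝ) (z : ℂ) : ℝ :=
  pdxR (pdxR f) z + pdyR (pdyR f) z

/-- Squared Euclidean norm of the gradient on `ℝ² ≅ ℂ`. -/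
noncomputable def gradSq (f : ℂ → ℝ) (z : ℂ) : ℝ :=
  (pdxR f z) ^ 2 + (pdyR f z) ^ 2

/-- The Daskalopoulos–Hamilton–Šešum quantity
`Q = v · (∂³v/∂z³) · (∂³v/∂z̄³)`, with Wirtinger derivatives taken in the `x`
variable. -/
noncomputable def QDHS (v : ℂ × ℝ → ℝ) : ℂ × ℝ → ℂ :=
  fun p => (v p : ℂ)
    * wz (wz (wz (fun w => (v (w, p.2) : ℂ)))) p.1
    * wzb (wzb (wzb (fun w => (v (w, p.2) : ℂ)))) p.1

/-!
On the algebra of complex functions smooth on `ℝ² × I`, the Wirtinger derivatives `∂`, `∂̄` and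
the time derivative `∂ₜ` are derivations which commute pairwise, by the symmetry of second
derivatives. In these terms `Δ = 4 ∂∂̄` and `‖∇v‖² = 4 ∂v ∂̄v`, so the flow reads
`∂ₜv = 4 (v ∂∂̄v − ∂v ∂̄v)`, and the evolution equation of `Q` becomes an identity between
differential polynomials in `v` which follows from the Leibniz rule alone.
-/

open Set TopologicalSpace
open scoped ContDiff

namespace Derivation

variable {K R : Type*} [CommRing K] [CommRing R] [Algebra K R]

@[simp]
lemma map_ofNat (D : Derivation K R R) (n : ℕ) [n.AtLeastTwo] :
    D (no_index (OfNat.ofNat n : R)) = 0 :=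
  D.map_natCast n

lemma apply_apply_comm_of_lie_eq_zero {D₁ D₂ : Derivation K R R} (h : ⁅D₁, D₂⁆ = 0) (a : R) :
    D₁ (D₂ a) = D₂ (D₁ a) :=
  sub_eq_zero.1 (by rw [← commutator_apply, h, zero_apply])

/-- The term `16 v⁻¹ (v v_{zz̄} − v_z v_{z̄}) Q` enters with `v⁻¹ Q = ∂³v ∂̄³v` already
simplified, so that no inverse is needed. -/
theorem dhs_evolution_identity {A B T : Derivation K R R}
    (hAB : ⁅A, B⁆ = 0) (hAT : ⁅A, T⁆ = 0) (hBT : ⁅B, T⁆ = 0)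
    {u : R} (hflow : T u = 4 * (u * A (B u) - A u * B u)) :
    T (u * A (A (A u)) * B (B (B u))) = u * (4 * A (B (u * A (A (A u)) * B (B (B u)))))
      - 16 * (u * A (B u) - A u * B u) * A (A (A u)) * B (B (B u))
      - 4 * (u * A (A (A (A u))) + 2 * A u * A (A (A u)))
          * (u * B (B (B (B u))) + 2 * B u * B (B (B u)))
      - 4 * (u * A (A (A (B u))) - B u * A (A (A u)))
          * (u * B (B (B (A u))) - A u * B (B (B u))) := by
  have hBA a : B (A a) = A (B a) := (apply_apply_comm_of_lie_eq_zero hAB a).symm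
  have hTA a : T (A a) = A (T a) := (apply_apply_comm_of_lie_eq_zero hAT a).symm
  have hTB a : T (B a) = B (T a) := (apply_apply_comm_of_lie_eq_zero hBT a).symm
  simp only [hBA, hTA, hTB, hflow, leibniz, map_sub, map_add, smul_eq_mul, map_ofNat,
    mul_zero, add_zero]
  ring

end Derivation

section SmoothFunctions

variable {E : Type*} [NormedAddCommGroup E] [NormedSpace ℝ E]

def smoothOn (U : Opens E) : Subalgebra ℂ (E → ℂ) where
  carrier := {f | ContDiffOn ℝ ∞ f U}
  mul_mem' := ContDiffOn.mul
  add_mem' := ContDiffOn.add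
  algebraMap_mem' _ := contDiffOn_const

namespace smoothOn

variable {U : Opens E}

noncomputable def evalAt (U : Opens E) (p : E) : smoothOn U →ₐ[ℂ] ℂ :=
  (Pi.evalAlgHom ℂ (fun _ => ℂ) p).comp (smoothOn U).val

@[simp]
lemma evalAt_apply (p : E) (f : smoothOn U) : evalAt U p f = (f : E → ℂ) p := rfl

lemma ext_evalAt {f g : smoothOn U} (h : ∀ p, evalAt U p f = evalAt U p g) : f = g :=
  Subtype.ext (funext h)

lemma differentiableAt_of_mem (f : smoothOn U) {p : E} (hp : p ∈ U) :
    DifferentiableAt ℝ (f : E → ℂ) p :=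
  (f.2.contDiffAt (U.isOpen.mem_nhds hp)).differentiableAt (by simp)

lemma contDiffOn_fderiv_apply (f : smoothOn U) (c : E) :
    ContDiffOn ℝ ∞ (fun p => fderiv ℝ (f : E → ℂ) p c) U :=
  (f.2.fderiv_of_isOpen U.isOpen (by simp)).clm_apply contDiffOn_const

/-- The directional derivative in direction `c`, extended by `0` off `U` so that the Leibniz
rule holds as an identity of functions on all of `E`. -/
noncomputable def dirDeriv (U : Opens E) (c : E) : Derivation ℂ (smoothOn U) (smoothOn U) :=
  Derivation.mk'
    { toFun := fun f => ⟨(U : Set E).indicator (fun p => fderiv ℝ (f : E → ℂ) p c),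
        (contDiffOn_fderiv_apply f c).congr fun p hp => indicator_of_mem hp _⟩
      map_add' := fun f g => by
        ext p
        by_cases hp : p ∈ U
        · simp [indicator_of_mem hp,
            fderiv_add (differentiableAt_of_mem f hp) (differentiableAt_of_mem g hp)]
        · simp [indicator_of_notMem hp]
      map_smul' := fun a f => by
        ext p
        by_cases hp : p ∈ U
        · simp [indicator_of_mem hp, fderiv_const_smul (differentiableAt_of_mem f hp)]
        · simp [indicator_of_notMem hp] }
    fun f g => by
      ext p
      by_cases hp : p ∈ U
      · simp [indicator_of_mem hp,
          fderiv_mul (differentiableAt_of_mem f hp) (differentiableAt_of_mem g hp)]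
      · simp [indicator_of_notMem hp]

lemma dirDeriv_apply_of_mem (c : E) (f : smoothOn U) {p : E} (hp : p ∈ U) :
    (dirDeriv U c f : E → ℂ) p = fderiv ℝ (f : E → ℂ) p c :=
  indicator_of_mem hp (fun q => fderiv ℝ (f : E → ℂ) q c)

lemma dirDeriv_apply_of_notMem (c : E) (f : smoothOn U) {p : E} (hp : p ∉ U) :
    (dirDeriv U c f : E → ℂ) p = 0 :=
  indicator_of_notMem hp (fun q => fderiv ℝ (f : E → ℂ) q c)

lemma dirDeriv_dirDeriv_apply (c d : E) (f : smoothOn U) {p : E} (hp : p ∈ U) :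
    (dirDeriv U c (dirDeriv U d f) : E → ℂ) p = fderiv ℝ (fderiv ℝ (f : E → ℂ)) p c d := by
  have hf := f.2.contDiffAt (U.isOpen.mem_nhds hp)
  have hev : (dirDeriv U d f : E → ℂ) =ᶠ[nhds p] fun q => fderiv ℝ (f : E → ℂ) q d :=
    Filter.eventually_of_mem (U.isOpen.mem_nhds hp) fun q hq => dirDeriv_apply_of_mem d f hq
  rw [dirDeriv_apply_of_mem c _ hp, hev.fderiv_eq, fderiv_clm_apply
    ((hf.fderiv_right (m := 1) (by decide)).differentiableAt (by simp))
    (differentiableAt_const d), fderiv_const_apply]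
  simp

lemma lie_dirDeriv (c d : E) : ⁅dirDeriv U c, dirDeriv U d⁆ = 0 := by
  ext f : 1
  apply Subtype.ext
  funext p
  by_cases hp : p ∈ U
  · have hsymm := (f.2.contDiffAt (U.isOpen.mem_nhds hp)).isSymmSndFDerivAt
      (by rw [minSmoothness_of_isRCLikeNormedField]; decide)
    simp [Derivation.commutator_apply, dirDeriv_dirDeriv_apply _ _ _ hp, hsymm c d]
  · simp [Derivation.commutator_apply, dirDeriv_apply_of_notMem _ _ hp]

lemma dirDeriv_comm (c d : E) (f : smoothOn U) :
    dirDeriv U c (dirDeriv U d f) = dirDeriv U d (dirDeriv U c f) :=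
  Derivation.apply_apply_comm_of_lie_eq_zero (lie_dirDeriv c d) f

lemma deriv_comp_eq_dirDeriv (f : smoothOn U) {γ : ℝ → E} {c : E} {s : ℝ}
    (hγ : HasDerivAt γ c s) (hs : γ s ∈ U) :
    deriv (fun r => (f : E → ℂ) (γ r)) s = (dirDeriv U c f : E → ℂ) (γ s) := by
  rw [dirDeriv_apply_of_mem c f hs]
  exact ((differentiableAt_of_mem f hs).hasFDerivAt.comp_hasDerivAt s hγ).deriv

def ofReal {v : E → ℝ} (hv : ContDiffOn ℝ ∞ v U) : smoothOn U :=
  ⟨fun p => (v p : ℂ), Complex.ofRealCLM.contDiff.comp_contDiffOn hv⟩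

end smoothOn

end SmoothFunctions

namespace smoothOn

open Complex

variable {U : Opens (ℂ × ℝ)}

noncomputable def wirtingerZ (U : Opens (ℂ × ℝ)) : Derivation ℂ (smoothOn U) (smoothOn U) :=
  (2⁻¹ : ℂ) • (dirDeriv U (1, 0) - I • dirDeriv U (I, 0))

noncomputable def wirtingerZbar (U : Opens (ℂ × ℝ)) : Derivation ℂ (smoothOn U) (smoothOn U) :=
  (2⁻¹ : ℂ) • (dirDeriv U (1, 0) + I • dirDeriv U (I, 0))

noncomputable def timeDeriv (U : Opens (ℂ × ℝ)) : Derivation ℂ (smoothOn U) (smoothOn U) :=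
  dirDeriv U (0, 1)

noncomputable def dhsQuantity (u : smoothOn U) : smoothOn U :=
  u * wirtingerZ U (wirtingerZ U (wirtingerZ U u))
    * wirtingerZbar U (wirtingerZbar U (wirtingerZbar U u))

lemma lie_wirtingerZ_wirtingerZbar : ⁅wirtingerZ U, wirtingerZbar U⁆ = 0 := by
  ext f : 1
  simp only [wirtingerZ, wirtingerZbar, Derivation.commutator_apply, Derivation.smul_apply,
    Derivation.sub_apply, Derivation.add_apply, Derivation.map_smul, Derivation.zero_apply,
    map_sub, map_add, dirDeriv_comm (U := U) (I, 0) (1, 0)]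
  module

lemma lie_wirtingerZ_timeDeriv : ⁅wirtingerZ U, timeDeriv U⁆ = 0 := by
  ext f : 1
  simp only [wirtingerZ, timeDeriv, Derivation.commutator_apply, Derivation.smul_apply,
    Derivation.sub_apply, Derivation.map_smul, Derivation.zero_apply, map_sub,
    dirDeriv_comm (U := U) (0, 1)]
  module

lemma lie_wirtingerZbar_timeDeriv : ⁅wirtingerZbar U, timeDeriv U⁆ = 0 := by
  ext f : 1
  simp only [wirtingerZbar, timeDeriv, Derivation.commutator_apply, Derivation.smul_apply,
    Derivation.add_apply, Derivation.map_smul, Derivation.zero_apply, map_add,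
    dirDeriv_comm (U := U) (0, 1)]
  module

lemma four_mul_wirtingerZ_wirtingerZbar (f : smoothOn U) :
    4 * wirtingerZ U (wirtingerZbar U f)
      = dirDeriv U (1, 0) (dirDeriv U (1, 0) f) + dirDeriv U (I, 0) (dirDeriv U (I, 0) f) := by
  simp only [wirtingerZ, wirtingerZbar, Derivation.smul_apply, Derivation.sub_apply,
    Derivation.add_apply, Derivation.map_smul, map_add, dirDeriv_comm (U := U) (I, 0) (1, 0)]
  refine ext_evalAt fun p => ?_
  simp only [map_mul, map_add, map_sub, map_smul, map_ofNat, smul_eq_mul]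
  linear_combination (-evalAt U p (dirDeriv U (I, 0) (dirDeriv U (I, 0) f))) * I_sq

lemma four_mul_wirtingerZ_mul_wirtingerZbar (f : smoothOn U) :
    4 * (wirtingerZ U f * wirtingerZbar U f)
      = dirDeriv U (1, 0) f ^ 2 + dirDeriv U (I, 0) f ^ 2 := by
  simp only [wirtingerZ, wirtingerZbar, Derivation.smul_apply, Derivation.sub_apply,
    Derivation.add_apply]
  refine ext_evalAt fun p => ?_
  simp only [map_mul, map_add, map_sub, map_smul, map_pow, map_ofNat, smul_eq_mul]
  linear_combination (-evalAt U p (dirDeriv U (I, 0) f) ^ 2) * I_sq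

variable {x : ℂ} {t : ℝ}

lemma pdx_slice (f : smoothOn U) (ht : ∀ w, (w, t) ∈ U) :
    pdx (fun w => (f : ℂ × ℝ → ℂ) (w, t)) = fun w => (dirDeriv U (1, 0) f : ℂ × ℝ → ℂ) (w, t) := by
  funext w
  have hγ : HasDerivAt (fun s : ℝ => (w + (s : ℂ), t)) (1, 0) 0 :=
    ((ofRealCLM.hasDerivAt (x := 0)).const_add w).prodMk (hasDerivAt_const 0 t)
  simpa [pdx] using deriv_comp_eq_dirDeriv f hγ (by simpa using ht w)

lemma pdy_slice (f : smoothOn U) (ht : ∀ w, (w, t) ∈ U) :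
    pdy (fun w => (f : ℂ × ℝ → ℂ) (w, t)) = fun w => (dirDeriv U (I, 0) f : ℂ × ℝ → ℂ) (w, t) := by
  funext w
  have hγ : HasDerivAt (fun s : ℝ => (w + (s : ℂ) * I, t)) (I, 0) 0 := by
    simpa using (((ofRealCLM.hasDerivAt (x := 0)).mul_const I).const_add w).prodMk
      (hasDerivAt_const 0 t)
  simpa [pdy] using deriv_comp_eq_dirDeriv f hγ (by simpa using ht w)

lemma deriv_slice (f : smoothOn U) (hx : (x, t) ∈ U) :
    deriv (fun s => (f : ℂ × ℝ → ℂ) (x, s)) t = (timeDeriv U f : ℂ × ℝ → ℂ) (x, t) :=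
  deriv_comp_eq_dirDeriv f ((hasDerivAt_const t x).prodMk (hasDerivAt_id t)) hx

lemma wz_slice (f : smoothOn U) (ht : ∀ w, (w, t) ∈ U) :
    wz (fun w => (f : ℂ × ℝ → ℂ) (w, t)) = fun w => (wirtingerZ U f : ℂ × ℝ → ℂ) (w, t) := by
  funext w
  rw [wz, pdx_slice f ht, pdy_slice f ht, ← evalAt_apply]
  simp only [wirtingerZ, Derivation.smul_apply, Derivation.sub_apply, map_smul, map_sub,
    smul_eq_mul, evalAt_apply]
  ring

lemma wzb_slice (f : smoothOn U) (ht : ∀ w, (w, t) ∈ U) :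
    wzb (fun w => (f : ℂ × ℝ → ℂ) (w, t)) = fun w => (wirtingerZbar U f : ℂ × ℝ → ℂ) (w, t) := by
  funext w
  rw [wzb, pdx_slice f ht, pdy_slice f ht, ← evalAt_apply]
  simp only [wirtingerZbar, Derivation.smul_apply, Derivation.add_apply, map_smul, map_add,
    smul_eq_mul, evalAt_apply]
  ring

lemma lapC_slice (f : smoothOn U) (ht : ∀ w, (w, t) ∈ U) (x : ℂ) :
    lapC (fun w => (f : ℂ × ℝ → ℂ) (w, t)) x
      = ((4 * wirtingerZ U (wirtingerZbar U f) : smoothOn U) : ℂ × ℝ → ℂ) (x, t) := by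
  rw [lapC, pdx_slice f ht, pdy_slice f ht, pdx_slice _ ht, pdy_slice _ ht,
    four_mul_wirtingerZ_wirtingerZbar]
  rfl

end smoothOn

section RealValued

open Complex

lemma deriv_ofReal_comp (f : ℝ → ℝ) (x : ℝ) : deriv (fun s => (f s : ℂ)) x = deriv f x := by
  by_cases hf : DifferentiableAt ℝ f x
  · exact hf.hasDerivAt.ofReal_comp.deriv
  · have hf' : ¬ DifferentiableAt ℝ (fun s => (f s : ℂ)) x := fun h =>
      hf (by simpa [Function.comp_def] using reCLM.differentiableAt.comp x h)
    rw [deriv_zero_of_not_differentiableAt hf, deriv_zero_of_not_differentiableAt hf', ofReal_zero]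

lemma ofReal_pdxR (f : ℂ → ℝ) (z : ℂ) : (pdxR f z : ℂ) = pdx (fun w => (f w : ℂ)) z :=
  (deriv_ofReal_comp _ _).symm

lemma ofReal_pdyR (f : ℂ → ℝ) (z : ℂ) : (pdyR f z : ℂ) = pdy (fun w => (f w : ℂ)) z :=
  (deriv_ofReal_comp _ _).symm

lemma ofReal_lapR (f : ℂ → ℝ) (z : ℂ) : (lapR f z : ℂ) = lapC (fun w => (f w : ℂ)) z := by
  rw [lapR, lapC, ofReal_add, ofReal_pdxR, ofReal_pdyR, funext (ofReal_pdxR f),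
    funext (ofReal_pdyR f)]

lemma ofReal_gradSq (f : ℂ → ℝ) (z : ℂ) :
    (gradSq f z : ℂ) = pdx (fun w => (f w : ℂ)) z ^ 2 + pdy (fun w => (f w : ℂ)) z ^ 2 := by
  rw [gradSq, ofReal_add, ofReal_pow, ofReal_pow, ofReal_pdxR, ofReal_pdyR]

end RealValued

def timeSlab (J : Set ℝ) (hJ : IsOpen J) : Opens (ℂ × ℝ) := ⟨univ ×ˢ J, isOpen_univ.prod hJ⟩

lemma mem_timeSlab {J : Set ℝ} {hJ : IsOpen J} {p : ℂ × ℝ} : p ∈ timeSlab J hJ ↔ p.2 ∈ J := by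
  simp [timeSlab]

namespace smoothOn

variable {J : Set ℝ} (hJ : IsOpen J) {v : ℂ × ℝ → ℝ} (hv : ContDiffOn ℝ ∞ v (univ ×ˢ J))
include hv

lemma timeDeriv_ofReal_eq
    (hflow : ∀ p : ℂ × ℝ, p.2 ∈ J → deriv (fun s => v (p.1, s)) p.2
      = v p * lapR (fun z => v (z, p.2)) p.1 - gradSq (fun z => v (z, p.2)) p.1) :
    timeDeriv _ (ofReal (U := timeSlab J hJ) hv)
      = 4 * (ofReal hv * wirtingerZ _ (wirtingerZbar _ (ofReal hv))
        - wirtingerZ _ (ofReal hv) * wirtingerZbar _ (ofReal hv)) := by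
  set u := ofReal (U := timeSlab J hJ) hv
  rw [show 4 * (u * wirtingerZ _ (wirtingerZbar _ u) - wirtingerZ _ u * wirtingerZbar _ u)
      = u * (4 * wirtingerZ _ (wirtingerZbar _ u))
        - (dirDeriv _ (1, 0) u ^ 2 + dirDeriv _ (Complex.I, 0) u ^ 2) by
    rw [← four_mul_wirtingerZ_mul_wirtingerZbar]; ring]
  refine ext_evalAt fun ⟨x, t⟩ => ?_
  by_cases ht : t ∈ J
  · have hslab : ∀ w, (w, t) ∈ timeSlab J hJ := fun w => mem_timeSlab.2 ht
    have h := congrArg (fun r : ℝ => (r : ℂ)) (hflow (x, t) ht)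
    simp only [← deriv_ofReal_comp, Complex.ofReal_sub, Complex.ofReal_mul, ofReal_lapR,
      ofReal_gradSq] at h
    change deriv (fun s => (u : ℂ × ℝ → ℂ) (x, s)) t = (u : ℂ × ℝ → ℂ) (x, t)
      * lapC (fun z => (u : ℂ × ℝ → ℂ) (z, t)) x - (pdx (fun z => (u : ℂ × ℝ → ℂ) (z, t)) x ^ 2
        + pdy (fun z => (u : ℂ × ℝ → ℂ) (z, t)) x ^ 2) at h
    rw [deriv_slice u (hslab x), lapC_slice u hslab, pdx_slice u hslab, pdy_slice u hslab] at h
    simp only [← evalAt_apply] at h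
    simpa only [map_sub, map_mul, map_add, map_pow] using h
  · have hp : (x, t) ∉ timeSlab J hJ := fun h => ht (mem_timeSlab.1 h)
    simp [timeDeriv, wirtingerZ, wirtingerZbar, dirDeriv_apply_of_notMem _ _ hp]

variable {t : ℝ} (ht : t ∈ J)
include ht

lemma QDHS_eq_apply (w : ℂ) :
    QDHS v (w, t) = (dhsQuantity (ofReal (U := timeSlab J hJ) hv) : ℂ × ℝ → ℂ) (w, t) := by
  have hslab : ∀ w, (w, t) ∈ timeSlab J hJ := fun w => mem_timeSlab.2 ht
  let u := ofReal (U := timeSlab J hJ) hv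
  change (u : ℂ × ℝ → ℂ) (w, t) * wz (wz (wz (fun w => (u : ℂ × ℝ → ℂ) (w, t)))) w
      * wzb (wzb (wzb (fun w => (u : ℂ × ℝ → ℂ) (w, t)))) w = _
  simp only [wz_slice _ hslab, wzb_slice _ hslab]
  rfl

lemma deriv_QDHS_eq (x : ℂ) :
    deriv (fun s => QDHS v (x, s)) t
      = (timeDeriv _ (dhsQuantity (ofReal (U := timeSlab J hJ) hv)) : ℂ × ℝ → ℂ) (x, t) := by
  rw [← deriv_slice _ (mem_timeSlab.2 ht)]
  refine Filter.EventuallyEq.deriv_eq ?_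
  filter_upwards [hJ.mem_nhds ht] with s hs using QDHS_eq_apply hJ hv hs x

lemma lapC_QDHS_eq (x : ℂ) :
    lapC (fun w => QDHS v (w, t)) x = ((4 * wirtingerZ _ (wirtingerZbar _
      (dhsQuantity (ofReal (U := timeSlab J hJ) hv))) : smoothOn _) : ℂ × ℝ → ℂ) (x, t) := by
  rw [funext (QDHS_eq_apply hJ hv ht), lapC_slice _ fun w => mem_timeSlab.2 ht]

end smoothOn

open smoothOn

theorem QDHS_evolution_general (I : Set ℝ) (hI_open : IsOpen I)
    (v : ℂ × ℝ → ℝ)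
    (hv_smooth : ContDiffOn ℝ (⊤ : ℕ∞) v (Set.univ ×ˢ I))
    (hv_pos : ∀ p : ℂ × ℝ, p.2 ∈ I → 0 < v p)
    (hv_flow : ∀ p : ℂ × ℝ, p.2 ∈ I →
      deriv (fun s : ℝ => v (p.1, s)) p.2
        = v p * lapR (fun z => v (z, p.2)) p.1 - gradSq (fun z => v (z, p.2)) p.1) :
    ∀ (x : ℂ) (t : ℝ), t ∈ I →
      ∀ V : ℂ → ℂ, V = (fun w => (v (w, t) : ℂ)) →
        deriv (fun s : ℝ => QDHS v (x, s)) t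
          = V x * lapC (fun w => QDHS v (w, t)) x
            - 16 * (V x)⁻¹ * (V x * wz (wzb V) x - wz V x * wzb V x) * QDHS v (x, t)
            - 4 * (V x * wz (wz (wz (wz V))) x + 2 * wz V x * wz (wz (wz V)) x)
                * (V x * wzb (wzb (wzb (wzb V))) x + 2 * wzb V x * wzb (wzb (wzb V)) x)
            - 4 * (V x * wz (wz (wz (wzb V))) x - wzb V x * wz (wz (wz V)) x)
                * (V x * wzb (wzb (wzb (wz V))) x - wz V x * wzb (wzb (wzb V)) x) := by
  rintro x t ht V rfl
  have hslab : ∀ w, (w, t) ∈ timeSlab I hI_open := fun w => mem_timeSlab.2 ht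
  have hv : evalAt (timeSlab I hI_open) (x, t) (ofReal hv_smooth) ≠ 0 := by
    change (v (x, t) : ℂ) ≠ 0
    exact_mod_cast (hv_pos (x, t) ht).ne'
  have key := congrArg (evalAt _ (x, t)) (Derivation.dhs_evolution_identity
    lie_wirtingerZ_wirtingerZbar lie_wirtingerZ_timeDeriv lie_wirtingerZbar_timeDeriv
    (timeDeriv_ofReal_eq hI_open hv_smooth hv_flow))
  rw [deriv_QDHS_eq hI_open hv_smooth ht, lapC_QDHS_eq hI_open hv_smooth ht,
    QDHS_eq_apply hI_open hv_smooth ht, show (fun w => (v (w, t) : ℂ))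
      = fun w => (ofReal (U := timeSlab I hI_open) hv_smooth : ℂ × ℝ → ℂ) (w, t) from rfl]
  simp only [wz_slice _ hslab, wzb_slice _ hslab]
  simp only [← evalAt_apply]
  simp only [dhsQuantity, map_mul, map_sub, map_add, map_ofNat] at key ⊢
  rw [key]
  field_simp

/-- Let `v` be a smooth positive solution of
`∂v/∂t = v·Δv − ‖∇v‖²` on `ℝ² × I`, `I` an open interval. Then
`Q = v·v_{zzz}·v_{z̄z̄z̄}` satisfies the Daskalopoulos–Hamilton–Šešum evolution
equation
`∂Q/∂t = v·ΔQ − 16 v⁻¹ (v v_{z z̄} − v_z v_{z̄}) Q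
  − 4 (v v_{zzzz} + 2 v_z v_{zzz})(v v_{z̄z̄z̄z̄} + 2 v_{z̄} v_{z̄z̄z̄})
  − 4 (v v_{zzz z̄} − v_{z̄} v_{zzz})(v v_{z̄z̄z̄ z} − v_z v_{z̄z̄z̄})`. -/
theorem QDHS_evolution (I : Set ℝ) (hI_open : IsOpen I) (hI_conn : I.OrdConnected)
    (v : ℂ × ℝ → ℝ)
    (hv_smooth : ContDiffOn ℝ (⊤ : ℕ∞) v (Set.univ ×ˢ I))
    (hv_pos : ∀ p : ℂ × ℝ, p.2 ∈ I → 0 < v p)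
    (hv_flow : ∀ p : ℂ × ℝ, p.2 ∈ I →
      deriv (fun s : ℝ => v (p.1, s)) p.2
        = v p * lapR (fun z => v (z, p.2)) p.1 - gradSq (fun z => v (z, p.2)) p.1) :
    ∀ (x : ℂ) (t : ℝ), t ∈ I →
      ∀ V : ℂ → ℂ, V = (fun w => (v (w, t) : ℂ)) →
        deriv (fun s : ℝ => QDHS v (x, s)) t
          = V x * lapC (fun w => QDHS v (w, t)) x
            - 16 * (V x)⁻¹ * (V x * wz (wzb V) x - wz V x * wzb V x) * QDHS v (x, t)
            - 4 * (V x * wz (wz (wz (wz V))) x + 2 * wz V x * wz (wz (wz V)) x)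
                * (V x * wzb (wzb (wzb (wzb V))) x + 2 * wzb V x * wzb (wzb (wzb V)) x)
            - 4 * (V x * wz (wz (wz (wzb V))) x - wzb V x * wz (wz (wz V)) x)
                * (V x * wzb (wzb (wzb (wz V))) x - wz V x * wzb (wzb (wzb V)) x) :=
  QDHS_evolution_general I hI_open v hv_smooth hv_pos hv_flow
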